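/- Let M be a compact metric space with Borel probability measure m, f : M → M Borel measurable, B ⊆ M Borel with B ⊆ f⁻¹(B), and K ⊆ M compact. If μ(K) = 1 for every measure μ ∈ O_{f|B} (the set of SRB-like measures for f|_B) and if L*(x) ⊆ O_{f|B} for m-a.e. x ∈ B, then for m-almost every x ∈ B and for every ε > 0, liminf_{n→∞} (1/n)·#{0 ≤ j ≤ n−1 : dist(f^j(x), K) < ε} = 1; i.e., B ⊆ B(K) up to an m-null set. -/

import Mathlib

/-!
Along a subsequence of times the empirical measures `ν_n(x)` converge weak* to some `μ ∈ L*(x)`;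
for `x` in the good set `μ` is SRB-like, so `μ(K) = 1`. Integrating an Urysohn function `ψ`
(equal to `1` on `K`, supported in the `ε`-neighbourhood of `K`) against `ν_n(x)` gives a lower
bound for the visit frequency that tends to `∫ ψ dμ = 1` along that subsequence. Since every
subsequence of times has such a further subsequence, the frequencies converge to `1`. The
subsequences exist because probability measures on a compact metric space form a sequentially
compact space: by sequential Banach–Alaoglu on the dual of the separable space `C(M, ℝ)` and the
Riesz–Markov–Kakutani theorem.
-/

open MeasureTheory Filter Metric Set
open scoped Classical ENNReal Topology NNReal

/-- Frequency of visits, up to time `n - 1`, of the orbit of `x` to the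
`ε`-neighborhood of `K`. -/
noncomputable def visitFreq {M : Type*} [MetricSpace M] (f : M → M) (K : Set M) (ε : ℝ)
    (x : M) (n : ℕ) : ℝ :=
  (((Finset.range n).filter (fun j => infDist (f^[j] x) K < ε)).card : ℝ) / n

/-- Basin of statistical attraction of `K`. -/
def statBasin {M : Type*} [MetricSpace M] (f : M → M) (K : Set M) : Set M :=
  {x | ∀ ε > 0, Tendsto (fun n => visitFreq f K ε x n) atTop (𝓝 1)}

/-- The empirical probability measure `ν_{n+1}(x) = (1/(n+1)) ∑_{j=0}^{n} δ_{f^j(x)}`. -/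
noncomputable def emp {M : Type*} [MeasurableSpace M] (f : M → M) (x : M) (n : ℕ) :
    ProbabilityMeasure M :=
  ⟨((n + 1 : ℝ≥0∞))⁻¹ • ∑ j ∈ Finset.range (n + 1), Measure.dirac (f^[j] x), by
    constructor
    simp [Measure.smul_apply, Measure.finset_sum_apply]
    exact ENNReal.inv_mul_cancel (by simp) (by simp)⟩

/-- The limit set `L*(x)`: all weak* limits of convergent subsequences of `ν_n(x)`. -/
def Lstar {M : Type*} [MetricSpace M] [MeasurableSpace M] [OpensMeasurableSpace M]
    (f : M → M) (x : M) : Set (ProbabilityMeasure M) :=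
  {μ | ∃ φ : ℕ → ℕ, StrictMono φ ∧ Tendsto (fun i => emp f x (φ i)) atTop (𝓝 μ)}

/-- `d` is a metric on the space of Borel probability measures inducing the weak* topology. -/
def IsWeakStarMetric {M : Type*} [MetricSpace M] [MeasurableSpace M] [OpensMeasurableSpace M]
    (d : ProbabilityMeasure M → ProbabilityMeasure M → ℝ) : Prop :=
  (∀ μ ν, 0 ≤ d μ ν) ∧ (∀ μ ν, d μ ν = d ν μ) ∧ (∀ μ ν, d μ ν = 0 ↔ μ = ν) ∧
    (∀ μ ν ρ, d μ ρ ≤ d μ ν + d ν ρ) ∧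
    (∀ (μ : ProbabilityMeasure M) (s : Set (ProbabilityMeasure M)),
      s ∈ 𝓝 μ ↔ ∃ ε > 0, {ν | d ν μ < ε} ⊆ s)

/-- `μ` is SRB-like (physical-like) for `f` restricted to `B`: for every `ε > 0` the basin of
`ε`-weak statistical attraction `{x ∈ B : dist*(L*(x), μ) < ε}` has positive `m`-measure. -/
def SRBlike {M : Type*} [MetricSpace M] [MeasurableSpace M] [OpensMeasurableSpace M]
    (m : Measure M) (f : M → M) (B : Set M)
    (d : ProbabilityMeasure M → ProbabilityMeasure M → ℝ) (μ : ProbabilityMeasure M) : Prop :=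
  ∀ ε > 0, 0 < m {x | x ∈ B ∧ ∃ ν ∈ Lstar f x, d ν μ < ε}

open scoped CompactlySupported BoundedContinuousFunction

namespace MeasureTheory.ProbabilityMeasure

variable {M : Type*} [MetricSpace M] [CompactSpace M] [MeasurableSpace M] [BorelSpace M]

lemma integrable_continuousMap (μ : ProbabilityMeasure M) (g : C(M, ℝ)) :
    Integrable g (μ : Measure M) :=
  g.continuous.integrable_of_hasCompactSupport (.of_compactSpace _)

noncomputable def integralCLM (μ : ProbabilityMeasure M) : StrongDual ℝ C(M, ℝ) :=
  LinearMap.mkContinuous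
    { toFun := fun g => ∫ x, g x ∂(μ : Measure M)
      map_add' := fun g h =>
        integral_add (μ.integrable_continuousMap g) (μ.integrable_continuousMap h)
      map_smul' := fun c g => integral_const_mul c _ }
    1 fun g => by
      simpa using norm_integral_le_of_norm_le_const (μ := (μ : Measure M))
        (Eventually.of_forall g.norm_coe_le_norm)

lemma norm_integralCLM_le (μ : ProbabilityMeasure M) : ‖μ.integralCLM‖ ≤ 1 :=
  LinearMap.mkContinuous_norm_le _ zero_le_one _

noncomputable def rieszPositiveLinearMap (L : StrongDual ℝ C(M, ℝ)) (hL : ∀ g, 0 ≤ g → 0 ≤ L g) :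
    C_c(M, ℝ) →ₚ[ℝ] ℝ :=
  PositiveLinearMap.mk₀
    { toFun := fun g => L g.toContinuousMap
      map_add' := fun g h => L.map_add g.toContinuousMap h.toContinuousMap
      map_smul' := fun c g => L.map_smul c g.toContinuousMap }
    fun _ => hL _

lemma integral_rieszMeasure_rieszPositiveLinearMap (L : StrongDual ℝ C(M, ℝ))
    (hL : ∀ g, 0 ≤ g → 0 ≤ L g) (g : C(M, ℝ)) :
    ∫ x, g x ∂(RealRMK.rieszMeasure (rieszPositiveLinearMap L hL)) = L g :=
  RealRMK.integral_rieszMeasure _ (CompactlySupportedContinuousMap.continuousMapEquiv g)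

noncomputable def rieszProbabilityMeasure (L : StrongDual ℝ C(M, ℝ)) (hL : ∀ g, 0 ≤ g → 0 ≤ L g)
    (hL₁ : L 1 = 1) : ProbabilityMeasure M :=
  ⟨RealRMK.rieszMeasure (rieszPositiveLinearMap L hL), ⟨by
    have h := integral_rieszMeasure_rieszPositiveLinearMap L hL 1
    simp only [ContinuousMap.one_apply, integral_const, smul_eq_mul, mul_one, hL₁] at h
    rw [← ofReal_measureReal, h, ENNReal.ofReal_one]⟩⟩

lemma integral_rieszProbabilityMeasure (L : StrongDual ℝ C(M, ℝ)) (hL : ∀ g, 0 ≤ g → 0 ≤ L g)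
    (hL₁ : L 1 = 1) (g : C(M, ℝ)) :
    ∫ x, g x ∂(rieszProbabilityMeasure L hL hL₁ : Measure M) = L g :=
  integral_rieszMeasure_rieszPositiveLinearMap L hL g

instance seqCompactSpace : SeqCompactSpace (ProbabilityMeasure M) := by
  refine ⟨fun μs _ => ?_⟩
  obtain ⟨L, -, φ, hφ, hL⟩ := WeakDual.isSeqCompact_closedBall ℝ C(M, ℝ) 0 1
    (x := fun n => StrongDual.toWeakDual (μs n).integralCLM)
    fun n => by simpa using (μs n).norm_integralCLM_le
  have hLg : ∀ g : C(M, ℝ),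
      Tendsto (fun n => ∫ x, g x ∂(μs (φ n) : Measure M)) atTop (𝓝 (L g)) :=
    fun g => ((WeakDual.eval_continuous g).tendsto L).comp hL
  have hpos : ∀ g : C(M, ℝ), 0 ≤ g → 0 ≤ L g := fun g hg =>
    ge_of_tendsto' (hLg g) fun n => integral_nonneg hg
  have hone : L 1 = 1 := tendsto_nhds_unique (hLg 1) (by simp)
  refine ⟨rieszProbabilityMeasure L hpos hone, mem_univ _, φ, hφ, ?_⟩
  refine tendsto_iff_forall_integral_tendsto.mpr fun g => ?_
  rw [show ∫ x, g x ∂(rieszProbabilityMeasure L hpos hone : Measure M) = L g.toContinuousMap from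
    integral_rieszProbabilityMeasure L hpos hone g.toContinuousMap]
  exact hLg g.toContinuousMap

end MeasureTheory.ProbabilityMeasure

section Orbit

variable {M : Type*} [MetricSpace M]

lemma visitFreq_le_one (f : M → M) (K : Set M) (ε : ℝ) (x : M) (n : ℕ) :
    visitFreq f K ε x n ≤ 1 :=
  div_le_one_of_le₀ (by exact_mod_cast (Finset.card_filter_le _ _).trans (Finset.card_range n).le)
    n.cast_nonneg

variable [MeasurableSpace M] [BorelSpace M]

lemma integral_emp (f : M → M) (x : M) (n : ℕ) (g : M → ℝ) :
    ∫ y, g y ∂(emp f x n : Measure M) =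
      (n + 1 : ℝ)⁻¹ * ∑ j ∈ Finset.range (n + 1), g (f^[j] x) := by
  change ∫ y, g y ∂((n + 1 : ℝ≥0∞)⁻¹ • ∑ j ∈ Finset.range (n + 1), Measure.dirac (f^[j] x)) = _
  rw [integral_smul_measure, integral_finsetSum_measure fun j _ => integrable_dirac (by simp),
    ENNReal.toReal_inv, smul_eq_mul]
  simp only [integral_dirac]
  norm_cast

lemma integral_emp_le_visitFreq (f : M → M) (K : Set M) (ε : ℝ) (x : M) {ψ : M → ℝ}
    (hψ : ∀ y, ψ y ≤ {y | infDist y K < ε}.indicator 1 y) (n : ℕ) :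
    ∫ y, ψ y ∂(emp f x n : Measure M) ≤ visitFreq f K ε x (n + 1) := by
  rw [integral_emp, visitFreq, div_eq_inv_mul, Finset.card_filter]
  push_cast
  gcongr with j
  simpa [Set.indicator_apply] using hψ (f^[j] x)

variable [CompactSpace M]

lemma tendsto_integral_emp_of_forall_mem_Lstar {f : M → M} {x : M} {g : M →ᵇ ℝ} {c : ℝ}
    (h : ∀ μ ∈ Lstar f x, ∫ y, g y ∂(μ : Measure M) = c) :
    Tendsto (fun n => ∫ y, g y ∂(emp f x n : Measure M)) atTop (𝓝 c) := by
  refine tendsto_of_subseq_tendsto fun ns hns => ?_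
  obtain ⟨ψ, -, hψ⟩ := strictMono_subseq_of_tendsto_atTop hns
  obtain ⟨μ, φ, hφ, hμ⟩ := SeqCompactSpace.tendsto_subseq fun i => emp f x (ns (ψ i))
  refine ⟨ψ ∘ φ, ?_⟩
  rw [← h μ ⟨ns ∘ ψ ∘ φ, hψ.comp hφ, hμ⟩]
  exact ProbabilityMeasure.tendsto_iff_forall_integral_tendsto.mp hμ g

theorem mem_statBasin_of_forall_mem_Lstar {f : M → M} {x : M} {K : Set M} (hK : IsClosed K)
    (h : ∀ μ ∈ Lstar f x, μ.toMeasure K = 1) : x ∈ statBasin f K := by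
  intro ε hε
  set U : Set M := {y | infDist y K < ε}
  have hKU : K ⊆ U := fun y hy => by simpa [U, infDist_zero_of_mem hy] using hε
  obtain ⟨ψ, hψU, hψK, hψ01⟩ := exists_continuous_zero_one_of_isClosed
    (isOpen_lt (continuous_infDist_pt K) continuous_const).isClosed_compl hK
    (disjoint_compl_left.mono_right hKU)
  have hψ_ind : ∀ y, ψ y ≤ U.indicator 1 y := fun y => by
    by_cases hy : y ∈ U
    · simpa [hy] using (hψ01 y).2
    · simp [hy, hψU (mem_compl hy)]
  have hψ_Lstar : ∀ μ ∈ Lstar f x, ∫ y, ψ y ∂(μ : Measure M) = 1 := fun μ hμ => by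
    have hK_ae : ∀ᵐ y ∂(μ : Measure M), y ∈ K :=
      (mem_ae_iff_prob_eq_one hK.measurableSet).mpr (h μ hμ)
    simp [integral_congr_ae (hK_ae.mono fun y hy => hψK hy)]
  have hlower := tendsto_integral_emp_of_forall_mem_Lstar
    (g := BoundedContinuousFunction.mkOfCompact ψ) hψ_Lstar
  refine (tendsto_add_atTop_iff_nat 1).mp ?_
  exact tendsto_of_tendsto_of_tendsto_of_le_of_le hlower tendsto_const_nhds
    (integral_emp_le_visitFreq f K ε x hψ_ind) fun n => visitFreq_le_one f K ε x (n + 1)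

end Orbit

theorem basin_contains_of_srbLike_full_general {M : Type*} [MetricSpace M] [CompactSpace M]
    [MeasurableSpace M] [BorelSpace M] (m : Measure M)
    (f : M → M) (B : Set M)
    (d : ProbabilityMeasure M → ProbabilityMeasure M → ℝ)
    (K : Set M) (hKc : IsCompact K)
    (hfull : ∀ μ : ProbabilityMeasure M, SRBlike m f B d μ → μ.toMeasure K = 1)
    (hae : ∀ᵐ x ∂m, x ∈ B → Lstar f x ⊆ {μ : ProbabilityMeasure M | SRBlike m f B d μ}) :
    ∀ᵐ x ∂m, x ∈ B → ∀ ε > 0,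
      atTop.liminf (fun n => visitFreq f K ε x n) = 1 := by
  filter_upwards [hae] with x hx hxB ε hε
  exact (mem_statBasin_of_forall_mem_Lstar hKc.isClosed
    (fun μ hμ => hfull μ (hx hxB hμ)) ε hε).liminf_eq

/-- if every SRB-like measure for `f|_B` gives full measure to the compact set
`K`, and `L*(x) ⊆ O_{f|B}` for `m`-a.e. `x ∈ B`, then for `m`-a.e. `x ∈ B` the asymptotic
frequency of visits to every `ε`-neighborhood of `K` equals `1`; i.e. `B ⊆ B(K)` mod `m`. -/
theorem basin_contains_of_srbLike_full {M : Type*} [MetricSpace M] [CompactSpace M]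
    [MeasurableSpace M] [BorelSpace M] (m : Measure M) [IsProbabilityMeasure m]
    (f : M → M) (hf : Measurable f) (B : Set M) (hB : MeasurableSet B)
    (hBinv : B ⊆ f ⁻¹' B)
    (d : ProbabilityMeasure M → ProbabilityMeasure M → ℝ) (hd : IsWeakStarMetric d)
    (K : Set M) (hKc : IsCompact K)
    (hfull : ∀ μ : ProbabilityMeasure M, SRBlike m f B d μ → μ.toMeasure K = 1)
    (hae : ∀ᵐ x ∂m, x ∈ B → Lstar f x ⊆ {μ : ProbabilityMeasure M | SRBlike m f B d μ}) :
    ∀ᵐ x ∂m, x ∈ B → ∀ ε > 0,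
      atTop.liminf (fun n => visitFreq f K ε x n) = 1 :=
  basin_contains_of_srbLike_full_general m f B d K hKc hfull hae
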